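/- arXiv:math/0606245 — 4 statements merged into one kernel-verified Lean document; each statement's English description precedes it below -/
import Mathlib

section
/- Let α : M² → R⁴ be an immersion with unit normal field ν such that II_ν = λ I for a nonzero constant λ, working in an orthogonal chart with orthonormal frame {ν^⊥, ν}. If the Gaussian curvature K = (e₁g₁ - f₁²)/(EG) + λ² is nowhere equal to λ², then α is hyperspherical: there is a constant vector γ with |α - γ/λ| = 1/|λ| everywhere. -/
set_option maxHeartbeats 1000000


noncomputable section
open scoped RealInnerProductSpace

abbrev E4 := EuclideanSpace ℝ (Fin 4)

/-- Partial derivative in the `u` direction. -/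
def pdu {V : Type*} [NormedAddCommGroup V] [NormedSpace ℝ V]
    (f : ℝ × ℝ → V) (p : ℝ × ℝ) : V := fderiv ℝ f p (1, 0)

/-- Partial derivative in the `v` direction. -/
def pdv {V : Type*} [NormedAddCommGroup V] [NormedSpace ℝ V]
    (f : ℝ × ℝ → V) (p : ℝ × ℝ) : V := fderiv ℝ f p (0, 1)

/-- Coefficients of the first fundamental form. -/
def Ec (α : ℝ × ℝ → E4) (p : ℝ × ℝ) : ℝ := ⟪pdu α p, pdu α p⟫
def Fc (α : ℝ × ℝ → E4) (p : ℝ × ℝ) : ℝ := ⟪pdu α p, pdv α p⟫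
def Gc (α : ℝ × ℝ → E4) (p : ℝ × ℝ) : ℝ := ⟪pdv α p, pdv α p⟫

/-- Coefficients of the second fundamental form relative to a normal field `ν`. -/
def ec (α ν : ℝ × ℝ → E4) (p : ℝ × ℝ) : ℝ := ⟪pdu (pdu α) p, ν p⟫
def fc (α ν : ℝ × ℝ → E4) (p : ℝ × ℝ) : ℝ := ⟪pdv (pdu α) p, ν p⟫
def gc (α ν : ℝ × ℝ → E4) (p : ℝ × ℝ) : ℝ := ⟪pdv (pdv α) p, ν p⟫

/-- The first fundamental form evaluated on a tangent direction `(du, dv)`. -/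
def Iform (α : ℝ × ℝ → E4) (p : ℝ × ℝ) (du dv : ℝ) : ℝ :=
  Ec α p * du ^ 2 + 2 * Fc α p * du * dv + Gc α p * dv ^ 2

/-- The second fundamental form relative to `ν` evaluated on `(du, dv)`. -/
def IIform (α ν : ℝ × ℝ → E4) (p : ℝ × ℝ) (du dv : ℝ) : ℝ :=
  ec α ν p * du ^ 2 + 2 * fc α ν p * du * dv + gc α ν p * dv ^ 2

section Helpers

variable {V : Type*} [NormedAddCommGroup V] [NormedSpace ℝ V]

lemma cd_pdu {f : ℝ × ℝ → V} (hf : ContDiff ℝ (⊤ : ℕ∞) f) : ContDiff ℝ (⊤ : ℕ∞) (pdu f) :=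
  (hf.fderiv_right (by simp)).clm_apply contDiff_const

lemma cd_pdv {f : ℝ × ℝ → V} (hf : ContDiff ℝ (⊤ : ℕ∞) f) : ContDiff ℝ (⊤ : ℕ∞) (pdv f) :=
  (hf.fderiv_right (by simp)).clm_apply contDiff_const

lemma pdu_inner {f g : ℝ × ℝ → E4} (hf : ContDiff ℝ (⊤ : ℕ∞) f) (hg : ContDiff ℝ (⊤ : ℕ∞) g) (p : ℝ × ℝ) :
    pdu (fun q => ⟪f q, g q⟫) p = ⟪pdu f p, g p⟫ + ⟪f p, pdu g p⟫ := by
  unfold pdu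
  rw [fderiv_inner_apply ℝ ((hf.differentiable (by simp)) p) ((hg.differentiable (by simp)) p)]
  ring

lemma pdv_inner {f g : ℝ × ℝ → E4} (hf : ContDiff ℝ (⊤ : ℕ∞) f) (hg : ContDiff ℝ (⊤ : ℕ∞) g) (p : ℝ × ℝ) :
    pdv (fun q => ⟪f q, g q⟫) p = ⟪pdv f p, g p⟫ + ⟪f p, pdv g p⟫ := by
  unfold pdv
  rw [fderiv_inner_apply ℝ ((hf.differentiable (by simp)) p) ((hg.differentiable (by simp)) p)]
  ring

lemma pdu_pdv_symm {f : ℝ × ℝ → V} (hf : ContDiff ℝ (⊤ : ℕ∞) f) (p : ℝ × ℝ) :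
    pdu (pdv f) p = pdv (pdu f) p := by
  have hsym := (hf.contDiffAt (x := p)).isSymmSndFDerivAt (by rw [minSmoothness_of_isRCLikeNormedField]; exact WithTop.coe_le_coe.mpr le_top)
  have hdf : Differentiable ℝ (fderiv ℝ f) :=
    (hf.fderiv_right (m := 1) (WithTop.coe_le_coe.mpr le_top)).differentiable (by simp)
  have h1 : ∀ (v : ℝ × ℝ), fderiv ℝ (fun q => fderiv ℝ f q v) p =
      (fderiv ℝ (fderiv ℝ f) p).flip v := by
    intro v
    rw [fderiv_clm_apply (hdf p) (differentiableAt_const v)]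
    simp
  unfold pdu pdv
  show fderiv ℝ (fun q => fderiv ℝ f q (0,1)) p (1,0)
      = fderiv ℝ (fun q => fderiv ℝ f q (1,0)) p (0,1)
  rw [h1, h1]
  exact hsym (1,0) (0,1)

lemma pdu_add {F G : ℝ × ℝ → ℝ} (hF : DifferentiableAt ℝ F p) (hG : DifferentiableAt ℝ G p) :
    pdu (fun q => F q + G q) p = pdu F p + pdu G p := by
  unfold pdu; rw [fderiv_fun_add hF hG]; rfl

lemma pdv_add {F G : ℝ × ℝ → ℝ} (hF : DifferentiableAt ℝ F p) (hG : DifferentiableAt ℝ G p) :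
    pdv (fun q => F q + G q) p = pdv F p + pdv G p := by
  unfold pdv; rw [fderiv_fun_add hF hG]; rfl

lemma pdu_cmul {F : ℝ × ℝ → ℝ} (c : ℝ) (hF : DifferentiableAt ℝ F p) :
    pdu (fun q => c * F q) p = c * pdu F p := by
  unfold pdu; rw [fderiv_const_mul hF]; rfl

lemma pdv_cmul {F : ℝ × ℝ → ℝ} (c : ℝ) (hF : DifferentiableAt ℝ F p) :
    pdv (fun q => c * F q) p = c * pdv F p := by
  unfold pdv; rw [fderiv_const_mul hF]; rfl

lemma pdu_constf (c : ℝ) (p : ℝ × ℝ) : pdu (fun _ : ℝ × ℝ => c) p = 0 := by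
  unfold pdu; rw [fderiv_fun_const]; rfl

lemma pdv_constf (c : ℝ) (p : ℝ × ℝ) : pdv (fun _ : ℝ × ℝ => c) p = 0 := by
  unfold pdv; rw [fderiv_fun_const]; rfl

lemma eq_zero_of_inner4 {x : Fin 4 → E4} (hx : Orthonormal ℝ x) {w : E4}
    (h : ∀ i, ⟪x i, w⟫ = 0) : w = 0 := by
  have hsp : Submodule.span ℝ (Set.range x) = ⊤ :=
    hx.linearIndependent.span_eq_top_of_card_eq_finrank (by simp)
  have hw : w ∈ (Submodule.span ℝ (Set.range x))ᗮ := by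
    rw [Submodule.mem_orthogonal]
    intro u hu
    induction hu using Submodule.span_induction with
    | mem u hu => obtain ⟨i, rfl⟩ := hu; exact h i
    | zero => simp
    | add u v _ _ hu hv => rw [inner_add_left, hu, hv]; ring
    | smul c u _ hu => rw [real_inner_smul_left, hu]; ring
  rw [hsp, Submodule.top_orthogonal_eq_bot] at hw
  simpa using hw

lemma frame_decomp {Au Av N P w : E4}
    (hEE : 0 < ⟪Au, Au⟫) (hGG : 0 < ⟪Av, Av⟫) (hFF : ⟪Au, Av⟫ = 0)
    (hN : ⟪N, N⟫ = 1) (hP : ⟪P, P⟫ = 1) (hNP : ⟪N, P⟫ = 0)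
    (hNAu : ⟪N, Au⟫ = 0) (hNAv : ⟪N, Av⟫ = 0)
    (hPAu : ⟪P, Au⟫ = 0) (hPAv : ⟪P, Av⟫ = 0)
    {c1 c2 c3 c4 : ℝ}
    (h1 : ⟪w, Au⟫ = c1 * ⟪Au, Au⟫) (h2 : ⟪w, Av⟫ = c2 * ⟪Av, Av⟫)
    (h3 : ⟪w, N⟫ = c3) (h4 : ⟪w, P⟫ = c4) :
    w = c1 • Au + c2 • Av + c3 • N + c4 • P := by
  have hAu0 : Au ≠ 0 := fun h => by simp [h] at hEE
  have hAv0 : Av ≠ 0 := fun h => by simp [h] at hGG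
  have hnAu : (‖Au‖ : ℝ) ≠ 0 := norm_ne_zero_iff.mpr hAu0
  have hnAv : (‖Av‖ : ℝ) ≠ 0 := norm_ne_zero_iff.mpr hAv0
  have hAuAu : ⟪Au, Au⟫ = ‖Au‖ ^ 2 := real_inner_self_eq_norm_sq Au
  have hAvAv : ⟪Av, Av⟫ = ‖Av‖ ^ 2 := real_inner_self_eq_norm_sq Av
  have hFF' : ⟪Av, Au⟫ = 0 := by rw [real_inner_comm]; exact hFF
  have hNP' : ⟪P, N⟫ = 0 := by rw [real_inner_comm]; exact hNP
  have hAuN : ⟪Au, N⟫ = 0 := by rw [real_inner_comm]; exact hNAu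
  have hAvN : ⟪Av, N⟫ = 0 := by rw [real_inner_comm]; exact hNAv
  have hAuP : ⟪Au, P⟫ = 0 := by rw [real_inner_comm]; exact hPAu
  have hAvP : ⟪Av, P⟫ = 0 := by rw [real_inner_comm]; exact hPAv
  have hAuw : ⟪Au, w⟫ = c1 * ⟪Au, Au⟫ := by rw [real_inner_comm]; exact h1
  have hAvw : ⟪Av, w⟫ = c2 * ⟪Av, Av⟫ := by rw [real_inner_comm]; exact h2
  have hNw : ⟪N, w⟫ = c3 := by rw [real_inner_comm]; exact h3
  have hPw : ⟪P, w⟫ = c4 := by rw [real_inner_comm]; exact h4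
  have hNn : ‖N‖ = 1 := by nlinarith [norm_nonneg N, real_inner_self_eq_norm_sq N, hN]
  have hPn : ‖P‖ = 1 := by nlinarith [norm_nonneg P, real_inner_self_eq_norm_sq P, hP]
  set x : Fin 4 → E4 := ![‖Au‖⁻¹ • Au, ‖Av‖⁻¹ • Av, N, P] with hx
  have hon : Orthonormal ℝ x := by
    rw [orthonormal_iff_ite]
    intro i j
    fin_cases i <;> fin_cases j <;>
      norm_num [-PiLp.inner_apply, hx, real_inner_smul_left, real_inner_smul_right,
        hFF, hFF', hN, hP, hNP, hNP', hNAu, hNAv, hPAu, hPAv,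
        hAuN, hAvN, hAuP, hAvP, hAuAu, hAvAv, sq, hNn, hPn, norm_smul, norm_inv, norm_norm, hnAu, hnAv, Fin.ext_iff]
  have hz : w - (c1 • Au + c2 • Av + c3 • N + c4 • P) = 0 := by
    apply eq_zero_of_inner4 hon
    intro i
    fin_cases i <;>
      norm_num [-PiLp.inner_apply, hx,
        inner_sub_right, inner_add_right, real_inner_smul_left, real_inner_smul_right,
        hFF, hFF', hN, hP, hNP, hNP', hNAu, hNAv, hPAu, hPAv,
        hAuN, hAvN, hAuP, hAvP, hAuw, hAvw, hNw, hPw, hAuAu, hAvAv, hNn, hPn, hnAu, hnAv] <;>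
      ring
  have h5 := sub_eq_zero.mp hz
  exact h5

end Helpers

/-- Theorem 3.4 of the paper: if `II_ν = λ I` for a nonzero constant `λ`
(in an orthogonal chart with orthonormal normal frame `{ν^⊥, ν}`) and the Gaussian
curvature `K = (e₁g₁ - f₁²)/(EG) + λ²` is nowhere equal to `λ²`, then `α` is
hyperspherical: there is a constant vector `γ` with `|α - γ/λ| = 1/|λ|` everywhere. -/
theorem stmt5 (α ν νperp : ℝ × ℝ → E4) (lam : ℝ) (hlam : lam ≠ 0)
    (hα : ContDiff ℝ (⊤ : ℕ∞) α) (hν : ContDiff ℝ (⊤ : ℕ∞) ν) (hνperp : ContDiff ℝ (⊤ : ℕ∞) νperp)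
    -- immersion with positive orthogonal chart
    (hE : ∀ p, 0 < Ec α p) (hG : ∀ p, 0 < Gc α p) (hF : ∀ p, Fc α p = 0)
    -- `{νperp, ν}` is an orthonormal normal frame
    (hνunit : ∀ p, ⟪ν p, ν p⟫ = 1) (hνperpunit : ∀ p, ⟪νperp p, νperp p⟫ = 1)
    (hνν : ∀ p, ⟪ν p, νperp p⟫ = 0)
    (hνu : ∀ p, ⟪ν p, pdu α p⟫ = 0) (hνv : ∀ p, ⟪ν p, pdv α p⟫ = 0)
    (hνpu : ∀ p, ⟪νperp p, pdu α p⟫ = 0) (hνpv : ∀ p, ⟪νperp p, pdv α p⟫ = 0)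
    -- `II_ν = λ I`
    (hIIe : ∀ p, ec α ν p = lam * Ec α p)
    (hIIf : ∀ p, fc α ν p = 0)
    (hIIg : ∀ p, gc α ν p = lam * Gc α p)
    -- the Gaussian curvature is nowhere equal to `λ²`
    (hK : ∀ p, (ec α νperp p * gc α νperp p - (fc α νperp p) ^ 2) / (Ec α p * Gc α p)
        + lam ^ 2 ≠ lam ^ 2) :
    ∃ γ : E4, ∀ p, ‖α p - (1 / lam) • γ‖ = 1 / |lam| := by
  -- differentiability facts
  have dα : Differentiable ℝ α := hα.differentiable (by simp)
  have dν : Differentiable ℝ ν := hν.differentiable (by simp)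
  have cαu : ContDiff ℝ (⊤ : ℕ∞) (pdu α) := cd_pdu hα
  have cαv : ContDiff ℝ (⊤ : ℕ∞) (pdv α) := cd_pdv hα
  have cνu : ContDiff ℝ (⊤ : ℕ∞) (pdu ν) := cd_pdu hν
  have cνv : ContDiff ℝ (⊤ : ℕ∞) (pdv ν) := cd_pdv hν
  have dαu : Differentiable ℝ (pdu α) := cαu.differentiable (by simp)
  have dαv : Differentiable ℝ (pdv α) := cαv.differentiable (by simp)
  have dνu : Differentiable ℝ (pdu ν) := cνu.differentiable (by simp)
  have dνv : Differentiable ℝ (pdv ν) := cνv.differentiable (by simp)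
  -- Step 1: tangential derivatives of ν against tangent vectors.
  -- N1 : ⟪ν_u, α_u⟫ = -(lam * E)
  have N1 : ∀ p, ⟪pdu ν p, pdu α p⟫ = -(lam * Ec α p) := by
    intro p
    have h0 : (fun q => ⟪ν q, pdu α q⟫) = fun _ : ℝ × ℝ => (0:ℝ) := funext hνu
    have h1 := congrFun (congrArg pdu h0) p
    rw [pdu_inner hν cαu, pdu_constf] at h1
    have h2 : ⟪ν p, pdu (pdu α) p⟫ = lam * Ec α p := by
      rw [real_inner_comm]; exact hIIe p
    linarith
  -- N2 : ⟪ν_v, α_u⟫ = 0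
  have N2 : ∀ p, ⟪pdv ν p, pdu α p⟫ = 0 := by
    intro p
    have h0 : (fun q => ⟪ν q, pdu α q⟫) = fun _ : ℝ × ℝ => (0:ℝ) := funext hνu
    have h1 := congrFun (congrArg pdv h0) p
    rw [pdv_inner hν cαu, pdv_constf] at h1
    have h2 : ⟪ν p, pdv (pdu α) p⟫ = 0 := by
      rw [real_inner_comm]; exact hIIf p
    linarith
  -- N3 : ⟪ν_u, α_v⟫ = 0
  have N3 : ∀ p, ⟪pdu ν p, pdv α p⟫ = 0 := by
    intro p
    have h0 : (fun q => ⟪ν q, pdv α q⟫) = fun _ : ℝ × ℝ => (0:ℝ) := funext hνv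
    have h1 := congrFun (congrArg pdu h0) p
    rw [pdu_inner hν cαv, pdu_constf] at h1
    have h2 : ⟪ν p, pdu (pdv α) p⟫ = 0 := by
      rw [pdu_pdv_symm hα p, real_inner_comm]; exact hIIf p
    linarith
  -- N4 : ⟪ν_v, α_v⟫ = -(lam * G)
  have N4 : ∀ p, ⟪pdv ν p, pdv α p⟫ = -(lam * Gc α p) := by
    intro p
    have h0 : (fun q => ⟪ν q, pdv α q⟫) = fun _ : ℝ × ℝ => (0:ℝ) := funext hνv
    have h1 := congrFun (congrArg pdv h0) p
    rw [pdv_inner hν cαv, pdv_constf] at h1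
    have h2 : ⟪ν p, pdv (pdv α) p⟫ = lam * Gc α p := by
      rw [real_inner_comm]; exact hIIg p
    linarith
  -- N5, N6 : ⟪ν_u, ν⟫ = 0, ⟪ν_v, ν⟫ = 0
  have N5 : ∀ p, ⟪pdu ν p, ν p⟫ = 0 := by
    intro p
    have h0 : (fun q => ⟪ν q, ν q⟫) = fun _ : ℝ × ℝ => (1:ℝ) := funext hνunit
    have h1 := congrFun (congrArg pdu h0) p
    rw [pdu_inner hν hν, pdu_constf] at h1
    have h2 : ⟪ν p, pdu ν p⟫ = ⟪pdu ν p, ν p⟫ := real_inner_comm _ _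
    linarith
  have N6 : ∀ p, ⟪pdv ν p, ν p⟫ = 0 := by
    intro p
    have h0 : (fun q => ⟪ν q, ν q⟫) = fun _ : ℝ × ℝ => (1:ℝ) := funext hνunit
    have h1 := congrFun (congrArg pdv h0) p
    rw [pdv_inner hν hν, pdv_constf] at h1
    have h2 : ⟪ν p, pdv ν p⟫ = ⟪pdv ν p, ν p⟫ := real_inner_comm _ _
    linarith
  -- decompositions of ν_u and ν_v in the moving frame
  have decompNu : ∀ p, pdu ν p
      = (-lam) • pdu α p + (0:ℝ) • pdv α p + ⟪pdu ν p, ν p⟫ • ν p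
        + ⟪pdu ν p, νperp p⟫ • νperp p := by
    intro p
    refine frame_decomp (hE p) (hG p) (hF p) (hνunit p) (hνperpunit p) (hνν p)
      (hνu p) (hνv p) (hνpu p) (hνpv p) ?_ ?_ rfl rfl
    · rw [N1 p]; show -(lam * Ec α p) = -lam * Ec α p; ring
    · rw [N3 p]; ring
  have decompNv : ∀ p, pdv ν p
      = (0:ℝ) • pdu α p + (-lam) • pdv α p + ⟪pdv ν p, ν p⟫ • ν p
        + ⟪pdv ν p, νperp p⟫ • νperp p := by
    intro p
    refine frame_decomp (hE p) (hG p) (hF p) (hνunit p) (hνperpunit p) (hνν p)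
      (hνu p) (hνv p) (hνpu p) (hνpv p) ?_ ?_ rfl rfl
    · rw [N2 p]; ring
    · rw [N4 p]; show -(lam * Gc α p) = -lam * Gc α p; ring
  have decompNu' : ∀ p, pdu ν p = (-lam) • pdu α p + ⟪pdu ν p, νperp p⟫ • νperp p := by
    intro p
    have h := decompNu p
    rw [N5 p] at h
    simpa using h
  have decompNv' : ∀ p, pdv ν p = (-lam) • pdv α p + ⟪pdv ν p, νperp p⟫ • νperp p := by
    intro p
    have h := decompNv p
    rw [N6 p] at h
    simpa using h
  -- Step 2: compatibility equations from equality of mixed partials.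
  -- key1 : pdv of N1
  have key1 : ∀ p, ⟪pdv (pdu ν) p, pdu α p⟫ + ⟪pdu ν p, pdv (pdu α) p⟫
      + lam * (⟪pdv (pdu α) p, pdu α p⟫ + ⟪pdu α p, pdv (pdu α) p⟫) = 0 := by
    intro p
    have h0 : (fun q => ⟪pdu ν q, pdu α q⟫ + lam * ⟪pdu α q, pdu α q⟫)
        = fun _ : ℝ × ℝ => (0:ℝ) := by
      funext q
      have := N1 q
      show ⟪pdu ν q, pdu α q⟫ + lam * Ec α q = 0
      linarith
    have h1 := congrFun (congrArg pdv h0) p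
    rw [pdv_add ((dνu p).inner ℝ (dαu p))
        (((dαu p).inner ℝ (dαu p)).const_mul lam),
      pdv_cmul lam ((dαu p).inner ℝ (dαu p)),
      pdv_inner cνu cαu, pdv_inner cαu cαu, pdv_constf] at h1
    linarith
  -- key2 : pdv of N3
  have key2 : ∀ p, ⟪pdv (pdu ν) p, pdv α p⟫ + ⟪pdu ν p, pdv (pdv α) p⟫ = 0 := by
    intro p
    have h0 : (fun q => ⟪pdu ν q, pdv α q⟫) = fun _ : ℝ × ℝ => (0:ℝ) := funext N3
    have h1 := congrFun (congrArg pdv h0) p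
    rw [pdv_inner cνu cαv, pdv_constf] at h1
    linarith
  -- key3 : pdu of N2
  have key3 : ∀ p, ⟪pdu (pdv ν) p, pdu α p⟫ + ⟪pdv ν p, pdu (pdu α) p⟫ = 0 := by
    intro p
    have h0 : (fun q => ⟪pdv ν q, pdu α q⟫) = fun _ : ℝ × ℝ => (0:ℝ) := funext N2
    have h1 := congrFun (congrArg pdu h0) p
    rw [pdu_inner cνv cαu, pdu_constf] at h1
    linarith
  -- key4 : pdu of N4
  have key4 : ∀ p, ⟪pdu (pdv ν) p, pdv α p⟫ + ⟪pdv ν p, pdu (pdv α) p⟫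
      + lam * (⟪pdu (pdv α) p, pdv α p⟫ + ⟪pdv α p, pdu (pdv α) p⟫) = 0 := by
    intro p
    have h0 : (fun q => ⟪pdv ν q, pdv α q⟫ + lam * ⟪pdv α q, pdv α q⟫)
        = fun _ : ℝ × ℝ => (0:ℝ) := by
      funext q
      have := N4 q
      show ⟪pdv ν q, pdv α q⟫ + lam * Gc α q = 0
      linarith
    have h1 := congrFun (congrArg pdu h0) p
    rw [pdu_add ((dνv p).inner ℝ (dαv p))
        (((dαv p).inner ℝ (dαv p)).const_mul lam),
      pdu_cmul lam ((dαv p).inner ℝ (dαv p)),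
      pdu_inner cνv cαv, pdu_inner cαv cαv, pdu_constf] at h1
    linarith
  -- keyF1 : pdu of F = 0, keyF2 : pdv of F = 0
  have keyF1 : ∀ p, ⟪pdu (pdu α) p, pdv α p⟫ + ⟪pdu α p, pdu (pdv α) p⟫ = 0 := by
    intro p
    have h0 : (fun q => ⟪pdu α q, pdv α q⟫) = fun _ : ℝ × ℝ => (0:ℝ) := funext hF
    have h1 := congrFun (congrArg pdu h0) p
    rw [pdu_inner cαu cαv, pdu_constf] at h1
    linarith
  have keyF2 : ∀ p, ⟪pdv (pdu α) p, pdv α p⟫ + ⟪pdu α p, pdv (pdv α) p⟫ = 0 := by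
    intro p
    have h0 : (fun q => ⟪pdu α q, pdv α q⟫) = fun _ : ℝ × ℝ => (0:ℝ) := funext hF
    have h1 := congrFun (congrArg pdv h0) p
    rw [pdv_inner cαu cαv, pdv_constf] at h1
    linarith
  -- Step 3: the normal connection form vanishes.
  have hac : ∀ p, ⟪pdu ν p, νperp p⟫ = 0 ∧ ⟪pdv ν p, νperp p⟫ = 0 := by
    intro p
    set a := ⟪pdu ν p, νperp p⟫ with ha
    set c := ⟪pdv ν p, νperp p⟫ with hc
    -- substitution facts
    have hNuAuv : ⟪pdu ν p, pdv (pdu α) p⟫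
        = -lam * ⟪pdu α p, pdv (pdu α) p⟫ + a * ⟪νperp p, pdv (pdu α) p⟫ := by
      rw [decompNu' p, inner_add_left, real_inner_smul_left, real_inner_smul_left]
    have hNuAvv : ⟪pdu ν p, pdv (pdv α) p⟫
        = -lam * ⟪pdu α p, pdv (pdv α) p⟫ + a * ⟪νperp p, pdv (pdv α) p⟫ := by
      rw [decompNu' p, inner_add_left, real_inner_smul_left, real_inner_smul_left]
    have hNvAuu : ⟪pdv ν p, pdu (pdu α) p⟫
        = -lam * ⟪pdv α p, pdu (pdu α) p⟫ + c * ⟪νperp p, pdu (pdu α) p⟫ := by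
      rw [decompNv' p, inner_add_left, real_inner_smul_left, real_inner_smul_left]
    have hNvAuv : ⟪pdv ν p, pdv (pdu α) p⟫
        = -lam * ⟪pdv α p, pdv (pdu α) p⟫ + c * ⟪νperp p, pdv (pdu α) p⟫ := by
      rw [decompNv' p, inner_add_left, real_inner_smul_left, real_inner_smul_left]
    -- symmetry rewrites
    have sν : pdu (pdv ν) p = pdv (pdu ν) p := pdu_pdv_symm hν p
    have sα : pdu (pdv α) p = pdv (pdu α) p := pdu_pdv_symm hα p
    have k1 := key1 p
    have k2 := key2 p
    have k3 := key3 p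
    have k4 := key4 p
    rw [sν, hNvAuu] at k3
    rw [sν, sα, hNvAuv] at k4
    rw [hNuAuv] at k1
    rw [hNuAvv] at k2
    have kF1 := keyF1 p
    have kF2 := keyF2 p
    rw [sα] at kF1
    -- comm facts
    have c1 : ⟪pdv (pdu α) p, pdu α p⟫ = ⟪pdu α p, pdv (pdu α) p⟫ := real_inner_comm _ _
    have c2 : ⟪pdv α p, pdu (pdu α) p⟫ = ⟪pdu (pdu α) p, pdv α p⟫ := real_inner_comm _ _
    have c3 : ⟪pdv (pdu α) p, pdv α p⟫ = ⟪pdv α p, pdv (pdu α) p⟫ := real_inner_comm _ _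
    have c4 : ⟪pdu α p, pdv (pdu α) p⟫ = ⟪pdv (pdu α) p, pdu α p⟫ := real_inner_comm _ _
    -- eq1 : f1 * a - e1 * c = 0 ; eq2 : g1 * a - f1 * c = 0
    have e1c : ⟪νperp p, pdu (pdu α) p⟫ = ec α νperp p := real_inner_comm _ _
    have f1c : ⟪νperp p, pdv (pdu α) p⟫ = fc α νperp p := real_inner_comm _ _
    have g1c : ⟪νperp p, pdv (pdv α) p⟫ = gc α νperp p := real_inner_comm _ _
    have eq1 : fc α νperp p * a - ec α νperp p * c = 0 := by
      rw [← e1c, ← f1c]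
      linear_combination k1 - k3 - lam * kF1 - lam * c1 - lam * c2
    have eq2 : gc α νperp p * a - fc α νperp p * c = 0 := by
      rw [← f1c, ← g1c]
      linear_combination k2 - k4 + lam * kF2
    -- determinant is nonzero
    have hdet : ec α νperp p * gc α νperp p - fc α νperp p ^ 2 ≠ 0 := by
      intro h0
      apply hK p
      rw [h0]
      simp
    have hEG : Ec α p * Gc α p > 0 := mul_pos (hE p) (hG p)
    constructor
    · have h : (fc α νperp p ^ 2 - ec α νperp p * gc α νperp p) * a = 0 := by
        linear_combination fc α νperp p * eq1 - ec α νperp p * eq2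
      rcases mul_eq_zero.mp h with h | h
      · exact absurd (by linarith [h] : ec α νperp p * gc α νperp p - fc α νperp p ^ 2 = 0)
          hdet
      · exact h
    · have h : (fc α νperp p ^ 2 - ec α νperp p * gc α νperp p) * c = 0 := by
        linear_combination gc α νperp p * eq1 - fc α νperp p * eq2
      rcases mul_eq_zero.mp h with h | h
      · exact absurd (by linarith [h] : ec α νperp p * gc α νperp p - fc α νperp p ^ 2 = 0)
          hdet
      · exact h
  -- Step 4: λ•α + ν is constant.
  have hNu : ∀ p, pdu ν p = (-lam) • pdu α p := by
    intro p
    have h := decompNu' p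
    rw [(hac p).1] at h
    simpa using h
  have hNv : ∀ p, pdv ν p = (-lam) • pdv α p := by
    intro p
    have h := decompNv' p
    rw [(hac p).2] at h
    simpa using h
  set g : ℝ × ℝ → E4 := fun q => lam • α q + ν q with hgdef
  have dg : Differentiable ℝ g := (dα.const_smul lam).add dν
  have hg0 : ∀ p, fderiv ℝ g p = 0 := by
    intro p
    have hfd : fderiv ℝ g p = lam • fderiv ℝ α p + fderiv ℝ ν p := by
      rw [hgdef]
      rw [fderiv_fun_add (f := fun q => lam • α q) ((dα p).const_smul lam) (dν p), fderiv_fun_const_smul (dα p)]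
    have h10 : fderiv ℝ g p (1, 0) = 0 := by
      rw [hfd]
      have := hNu p
      unfold pdu at this
      simp only [ContinuousLinearMap.add_apply, ContinuousLinearMap.coe_smul',
        Pi.smul_apply, this]
      module
    have h01 : fderiv ℝ g p (0, 1) = 0 := by
      rw [hfd]
      have := hNv p
      unfold pdv at this
      simp only [ContinuousLinearMap.add_apply, ContinuousLinearMap.coe_smul',
        Pi.smul_apply, this]
      module
    refine ContinuousLinearMap.ext fun w => ?_
    have hw : w = w.1 • ((1:ℝ), (0:ℝ)) + w.2 • ((0:ℝ), (1:ℝ)) := by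
      ext <;> simp
    rw [hw, map_add, map_smul, map_smul, h10, h01]
    simp
  have hconst : ∀ p, g p = g 0 := fun p => is_const_of_fderiv_eq_zero dg hg0 p 0
  refine ⟨g 0, fun p => ?_⟩
  have hgp : lam • α p + ν p = g 0 := hconst p
  have hrw : α p - (1 / lam) • g 0 = -((1 / lam) • ν p) := by
    rw [← hgp, smul_add, smul_smul]
    rw [one_div, inv_mul_cancel₀ hlam]
    module
  rw [hrw, norm_neg, norm_smul]
  have hν1 : ‖ν p‖ = 1 := by
    have h := hνunit p
    rw [real_inner_self_eq_norm_sq] at h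
    nlinarith [norm_nonneg (ν p)]
  rw [hν1, mul_one]
  simp [abs_div]
end
end

section
/- The two asymptotic directions defined by the quadratic equation T₁du² + T₂dudv + T₃dv² = 0, with T₁ = e₁f₂ - e₂f₁, T₂ = e₁g₂ - e₂g₁, T₃ = f₁g₂ - f₂g₁, are orthogonal with respect to the first fundamental form E du² + 2F dudv + G dv² at a point if and only if E T₃ - F T₂ + G T₁ = 0, which equals 2(EG - F²) k_N; hence (at points with real distinct asymptotic directions) the asymptotic directions are orthogonal if and only if the normal curvature k_N vanishes. -/
/-!
Two non-proportional roots `(a, b)`, `(c, d)` of a binary quadratic form `p x² + q xy + r y²`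
determine it up to a scalar: its coefficient vector is parallel to that of
`(b x - a y)(d x - c y)`, namely `(bd, -(ad + bc), ac)`. The orthogonality expression
`E ac + F(ad + bc) + G bd` and `E T₃ - F T₂ + G T₁` are the same linear functional, with
coefficients `(G, -F, E)`, evaluated on these two parallel nonzero vectors, so one vanishes
iff the other does.
-/

open Matrix

variable {R : Type*} [CommRing R] [IsDomain R]

theorem dotProduct_eq_zero_iff_of_cross_eq_zero {u v : Fin 3 → R} (hu : u ≠ 0) (hv : v ≠ 0)
    (huv : u ⨯₃ v = 0) (w : Fin 3 → R) : u ⬝ᵥ w = 0 ↔ v ⬝ᵥ w = 0 := by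
  have key : (u ⬝ᵥ w) • v = (v ⬝ᵥ w) • u := by
    rw [← sub_eq_zero, ← cross_cross_eq_smul_sub_smul, huv, map_zero, LinearMap.zero_apply]
  constructor
  · intro h
    rw [h, zero_smul, eq_comm, smul_eq_zero] at key
    exact key.resolve_right hu
  · intro h
    rw [h, zero_smul, smul_eq_zero] at key
    exact key.resolve_right hv

/-- The coefficients of `(b x - a y)(d x - c y)`, the binary quadratic form with roots
`(a : b)` and `(c : d)`. -/
def quadFormOfRoots (a b c d : R) : Fin 3 → R :=
  ![b * d, -(a * d + b * c), a * c]

theorem quadFormOfRoots_ne_zero {a b c d : R} (hdet : a * d - b * c ≠ 0) :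
    quadFormOfRoots a b c d ≠ 0 := by
  intro h
  have hsum : -(a * d + b * c) = 0 := congrFun h 1
  have hac : a * c = 0 := congrFun h 2
  apply hdet
  apply pow_eq_zero_iff two_ne_zero |>.mp
  linear_combination (-(a * d + b * c)) * hsum - 4 * b * d * hac

/-- A binary quadratic form vanishing at two non-proportional points is a multiple of the
product of the corresponding linear forms. -/
theorem cross_quadFormOfRoots_eq_zero {p q r a b c d : R} (hdet : a * d - b * c ≠ 0)
    (hab : p * a ^ 2 + q * a * b + r * b ^ 2 = 0)
    (hcd : p * c ^ 2 + q * c * d + r * d ^ 2 = 0) :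
    ![p, q, r] ⨯₃ quadFormOfRoots a b c d = 0 := by
  have cancel : ∀ x : R, (a * d - b * c) * x = 0 → x = 0 := fun x hx =>
    (mul_eq_zero.mp hx).resolve_left hdet
  simp only [quadFormOfRoots, cross_apply, cons_val_zero, cons_val_one, cons_val_two, vecHead,
    vecTail, Function.comp_apply, Fin.succ_zero_eq_one, cons_eq_zero_iff, zero_empty, and_true]
  refine ⟨cancel _ ?_, cancel _ ?_, cancel _ ?_⟩
  · linear_combination a ^ 2 * hcd - c ^ 2 * hab
  · linear_combination a * b * hcd - c * d * hab
  · linear_combination b ^ 2 * hcd - d ^ 2 * hab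

/-- the asymptotic directions (roots of `T₁du² + T₂dudv + T₃dv² = 0`) are
orthogonal with respect to the first fundamental form iff `E T₃ - F T₂ + G T₁ = 0`,
which equals `2(EG - F²) k_N`; hence (at points with real distinct asymptotic
directions) the asymptotic directions are orthogonal iff `k_N = 0`. -/
theorem stmt8 (E F G e₁ f₁ g₁ e₂ f₂ g₂ : ℝ) (hpos : 0 < E * G - F ^ 2)
    (T₁ T₂ T₃ kN : ℝ)
    (hT₁ : T₁ = e₁ * f₂ - e₂ * f₁) (hT₂ : T₂ = e₁ * g₂ - e₂ * g₁)
    (hT₃ : T₃ = f₁ * g₂ - f₂ * g₁)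
    (hkN : kN = (E * (f₁ * g₂ - f₂ * g₁) - F * (e₁ * g₂ - e₂ * g₁) +
      G * (e₁ * f₂ - e₂ * f₁)) / (2 * (E * G - F ^ 2)))
    -- the asymptotic equation is nondegenerate (real distinct directions)
    (hT : ¬(T₁ = 0 ∧ T₂ = 0 ∧ T₃ = 0)) :
    E * T₃ - F * T₂ + G * T₁ = 2 * (E * G - F ^ 2) * kN ∧
    ∀ a b c d : ℝ, (a, b) ≠ (0, 0) → (c, d) ≠ (0, 0) → a * d - b * c ≠ 0 →
      T₁ * a ^ 2 + T₂ * a * b + T₃ * b ^ 2 = 0 →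
      T₁ * c ^ 2 + T₂ * c * d + T₃ * d ^ 2 = 0 →
      (E * a * c + F * (a * d + b * c) + G * b * d = 0 ↔ kN = 0) := by
  have hkN' : E * T₃ - F * T₂ + G * T₁ = 2 * (E * G - F ^ 2) * kN := by
    rw [hkN, hT₁, hT₂, hT₃]
    field_simp
  refine ⟨hkN', fun a b c d _ _ hdet hab hcd => ?_⟩
  have hT0 : ![T₁, T₂, T₃] ≠ 0 := by
    simpa [funext_iff, Fin.forall_fin_succ] using hT
  have hortho : T₁ * G + T₂ * -F + T₃ * E = 0 ↔
      b * d * G + -(a * d + b * c) * -F + a * c * E = 0 := by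
    simpa only [quadFormOfRoots, vec3_dotProduct, cons_val_zero, cons_val_one, cons_val_two,
      vecHead, vecTail, Function.comp_apply, Fin.succ_zero_eq_one] using
      dotProduct_eq_zero_iff_of_cross_eq_zero hT0 (quadFormOfRoots_ne_zero hdet)
        (cross_quadFormOfRoots_eq_zero hdet hab hcd) ![G, -F, E]
  have hkN_iff : kN = 0 ↔ E * T₃ - F * T₂ + G * T₁ = 0 := by
    rw [hkN']
    simp [hpos.ne']
  rw [hkN_iff]
  convert hortho.symm using 2 <;> ring
end

section
/- If the quartic differential equation of lines of axial curvature factors as the product of the quadratic equation of mean directionally curved lines and the quadratic equation of asymptotic lines, i.e., Jac(‖η - H‖², I) = Jac{Jac(II_{ν₁}, II_{ν₂}), I} · Jac(II_{ν₁}, II_{ν₂}) as quartic forms in (du, dv), then every singular point of the asymptotic fields (inflection point) is a singular point of the axial curvature fields (axiumbilic point), at which the ellipse of curvature is a point. -/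
set_option maxHeartbeats 1000000


/-- if the quartic differential equation of lines of axial curvature
factors as the product of the quadratic equation of mean directionally curved lines and
the quadratic equation of asymptotic lines, then every inflection point (`Δ = 0` and
`k_N = 0`) is a singular point of the axial curvature fields, at which the ellipse of
curvature is a point (`η ≡ H`). -/
theorem stmt9 (E F G e₁ f₁ g₁ e₂ f₂ g₂ : ℝ) (hpos : 0 < E * G - F ^ 2) (hE : 0 < E)
    -- auxiliary quantities of the quartic axial-curvature equation
    (a₂ a₃ a₄ a₅ a₆ a₀ a₁ A₀ A₁ A₂ A₃ A₄ B₁ B₂ B₃ T₁ T₂ T₃ H₁ H₂ Δ kN : ℝ)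
    (ha₂ : a₂ = e₁ * f₁ + e₂ * f₂) (ha₃ : a₃ = e₁ * g₁ + e₂ * g₂)
    (ha₄ : a₄ = f₁ * g₁ + f₂ * g₂) (ha₅ : a₅ = 2 * (f₁ ^ 2 + f₂ ^ 2))
    (ha₆ : a₆ = E * G - 4 * F ^ 2)
    (ha₀ : a₀ = 4 * (F * (E * G - 2 * F ^ 2) * (e₁ ^ 2 + e₂ ^ 2) - E * a₆ * a₂ -
      E ^ 2 * F * (a₃ + a₅) + E ^ 3 * a₄))
    (ha₁ : a₁ = 4 * (G * a₆ * (e₁ ^ 2 + e₂ ^ 2) + 8 * E * F * G * a₂ +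
      E ^ 3 * (g₁ ^ 2 + g₂ ^ 2) - 2 * E ^ 2 * G * (a₃ + a₅)))
    (hA₀ : A₀ = a₀ * E ^ 3) (hA₁ : A₁ = a₁ * E ^ 3)
    (hA₂ : A₂ = -6 * a₀ * G * E ^ 2 + 3 * a₁ * F * E ^ 2)
    (hA₃ : A₃ = -8 * a₀ * E * F * G + a₁ * E * (4 * F ^ 2 - E * G))
    (hA₄ : A₄ = a₀ * G * (E * G - 4 * F ^ 2) + a₁ * F * (2 * F ^ 2 - E * G))
    -- coefficients of the equation of mean directionally curved lines
    (hB₁ : B₁ = (e₁ * g₂ - e₂ * g₁) * E + 2 * (e₂ * f₁ - e₁ * f₂) * F)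
    (hB₂ : B₂ = (f₁ * g₂ - f₂ * g₁) * E + (e₂ * f₁ - e₁ * f₂) * G)
    (hB₃ : B₃ = 2 * (f₁ * g₂ - f₂ * g₁) * F + (e₂ * g₁ - e₁ * g₂) * G)
    -- coefficients of the asymptotic equation
    (hT₁ : T₁ = e₁ * f₂ - e₂ * f₁) (hT₂ : T₂ = e₁ * g₂ - e₂ * g₁)
    (hT₃ : T₃ = f₁ * g₂ - f₂ * g₁)
    -- mean curvature vector components
    (hH₁ : H₁ = (E * g₁ - 2 * F * f₁ + G * e₁) / (2 * (E * G - F ^ 2)))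
    (hH₂ : H₂ = (E * g₂ - 2 * F * f₂ + G * e₂) / (2 * (E * G - F ^ 2)))
    -- the resultant `Δ` and the normal curvature `k_N`
    (hΔ : Δ = (1 / (4 * (E * G - F ^ 2))) *
      (Matrix.det !![e₁, 2 * f₁, g₁, 0; e₂, 2 * f₂, g₂, 0;
                     0, e₁, 2 * f₁, g₁; 0, e₂, 2 * f₂, g₂]))
    (hkN : kN = (E * (f₁ * g₂ - f₂ * g₁) - F * (e₁ * g₂ - e₂ * g₁) +
      G * (e₁ * f₂ - e₂ * f₁)) / (2 * (E * G - F ^ 2)))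
    -- the factorization of the quartic axial equation
    (hfact : ∀ du dv : ℝ,
      A₀ * du ^ 4 + A₁ * du ^ 3 * dv + A₂ * du ^ 2 * dv ^ 2 + A₃ * du * dv ^ 3 +
        A₄ * dv ^ 4 =
      (B₁ * du ^ 2 + 2 * B₂ * du * dv + B₃ * dv ^ 2) *
        (T₁ * du ^ 2 + T₂ * du * dv + T₃ * dv ^ 2))
    -- the point is an inflection point
    (hinfl : Δ = 0 ∧ kN = 0) :
    (A₀ = 0 ∧ A₁ = 0 ∧ A₂ = 0 ∧ A₃ = 0 ∧ A₄ = 0) ∧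
    ∀ du dv : ℝ, E * du ^ 2 + 2 * F * du * dv + G * dv ^ 2 ≠ 0 →
      (e₁ * du ^ 2 + 2 * f₁ * du * dv + g₁ * dv ^ 2) /
        (E * du ^ 2 + 2 * F * du * dv + G * dv ^ 2) = H₁ ∧
      (e₂ * du ^ 2 + 2 * f₂ * du * dv + g₂ * dv ^ 2) /
        (E * du ^ 2 + 2 * F * du * dv + G * dv ^ 2) = H₂ := by

  obtain ⟨hΔ0, hkN0⟩ := hinfl
  have hDne : (E * G - F ^ 2) ≠ 0 := ne_of_gt hpos
  have hEne : E ≠ 0 := ne_of_gt hE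
  have hEG : 0 < E * G := by linarith [sq_nonneg F]
  have hG : 0 < G := by
    rcases mul_pos_iff.mp hEG with ⟨_, h⟩ | ⟨h, _⟩
    · exact h
    · linarith
  -- Step 1: T₁ = T₂ = T₃ = 0
  have hdet : Matrix.det !![e₁, 2 * f₁, g₁, 0; e₂, 2 * f₂, g₂, 0;
      0, e₁, 2 * f₁, g₁; 0, e₂, 2 * f₂, g₂] = 4 * T₁ * T₃ - T₂ ^ 2 := by
    rw [hT₁, hT₂, hT₃]
    simp [Matrix.det_succ_row_zero, Fin.sum_univ_succ, Fin.succAbove]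
    ring
  have hq : T₂ ^ 2 = 4 * T₁ * T₃ := by
    rw [hdet] at hΔ
    have h4 : (4 : ℝ) * (E * G - F ^ 2) ≠ 0 := by positivity
    rw [hΔ0] at hΔ
    have := hΔ.symm
    rw [mul_comm, mul_one_div, div_eq_zero_iff] at this
    rcases this with h | h
    · linarith
    · exact absurd h h4
  have hl : E * T₃ - F * T₂ + G * T₁ = 0 := by
    rw [hkN0] at hkN
    have h2 : (2 : ℝ) * (E * G - F ^ 2) ≠ 0 := by positivity
    have := hkN.symm
    rw [div_eq_zero_iff] at this
    rcases this with h | h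
    · rw [hT₁, hT₂, hT₃]; linarith
    · exact absurd h h2
  have key : (E * T₃ - G * T₁) ^ 2 + (E * G - F ^ 2) * T₂ ^ 2 = 0 := by
    linear_combination (E * G) * hq + (E * T₃ + F * T₂ + G * T₁) * hl
  have ha' := sq_nonneg (E * T₃ - G * T₁)
  have hb' := mul_nonneg hpos.le (sq_nonneg T₂)
  have hT2z : T₂ = 0 := by
    have h1 : (E * G - F ^ 2) * T₂ ^ 2 = 0 := by linarith
    have h2 := (mul_eq_zero.mp h1).resolve_left hDne
    exact sq_eq_zero_iff.mp h2
  have hdiff : E * T₃ - G * T₁ = 0 := by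
    have h1 : (E * T₃ - G * T₁) ^ 2 = 0 := by
      have h1' : (E * G - F ^ 2) * T₂ ^ 2 ≥ 0 := hb'
      linarith
    exact sq_eq_zero_iff.mp h1
  have hsum : E * T₃ + G * T₁ = 0 := by rw [hT2z] at hl; linarith
  have hT3z : T₃ = 0 := by
    have : E * T₃ = 0 := by linarith
    exact (mul_eq_zero.mp this).resolve_left hEne
  have hT1z : T₁ = 0 := by
    have : G * T₁ = 0 := by linarith
    exact (mul_eq_zero.mp this).resolve_left (ne_of_gt hG)
  -- Step 2: all Aᵢ vanish
  have hz : ∀ du dv : ℝ, A₀ * du ^ 4 + A₁ * du ^ 3 * dv + A₂ * du ^ 2 * dv ^ 2 +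
      A₃ * du * dv ^ 3 + A₄ * dv ^ 4 = 0 := by
    intro du dv
    rw [hfact du dv, hT1z, hT2z, hT3z]; ring
  have e10 := hz 1 0
  have e01 := hz 0 1
  have e11 := hz 1 1
  have e1m1 := hz 1 (-1)
  have e21 := hz 2 1
  norm_num at e10 e01 e11 e1m1 e21
  have hA0z : A₀ = 0 := by linarith
  have hA4z : A₄ = 0 := by linarith
  have hA2z : A₂ = 0 := by linarith
  have hA3z : A₃ = 0 := by linarith
  have hA1z : A₁ = 0 := by linarith
  refine ⟨⟨hA0z, hA1z, hA2z, hA3z, hA4z⟩, ?_⟩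
  -- Step 3: a₀ = a₁ = 0
  have hE3 : E ^ 3 ≠ 0 := pow_ne_zero 3 hEne
  have ha0z : a₀ = 0 := by
    rw [hA₀] at hA0z
    exact (mul_eq_zero.mp hA0z).resolve_right hE3
  have ha1z : a₁ = 0 := by
    rw [hA₁] at hA1z
    exact (mul_eq_zero.mp hA1z).resolve_right hE3
  -- Step 4: umbilic relations
  set x₁ := F * e₁ - E * f₁ with hx₁
  set x₂ := F * e₂ - E * f₂ with hx₂
  set y₁ := G * e₁ - E * g₁ with hy₁
  set y₂ := G * e₂ - E * g₂ with hy₂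
  have hT1e : e₁ * f₂ - e₂ * f₁ = 0 := by rw [← hT₁]; exact hT1z
  have hT2e : e₁ * g₂ - e₂ * g₁ = 0 := by rw [← hT₂]; exact hT2z
  have hT3e : f₁ * g₂ - f₂ * g₁ = 0 := by rw [← hT₃]; exact hT3z
  have S1 : E * (x₁ * y₁ + x₂ * y₂) - 2 * F * (x₁ ^ 2 + x₂ ^ 2) = 0 := by
    rw [hx₁, hx₂, hy₁, hy₂]
    have h := ha0z
    rw [ha₀, ha₂, ha₃, ha₄, ha₅, ha₆] at h
    linear_combination (1/4) * h
  have S2 : E * (y₁ ^ 2 + y₂ ^ 2) - 4 * G * (x₁ ^ 2 + x₂ ^ 2) = 0 := by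
    rw [hx₁, hx₂, hy₁, hy₂]
    have h := ha1z
    rw [ha₁, ha₂, ha₃, ha₅, ha₆] at h
    linear_combination (1/4) * h
  have S3 : x₁ * y₂ - x₂ * y₁ = 0 := by
    rw [hx₁, hx₂, hy₁, hy₂]
    linear_combination (E ^ 2) * hT3e - (E * F) * hT2e + (E * G) * hT1e
  have hq4 : 4 * (E * G - F ^ 2) * (x₁ ^ 2 + x₂ ^ 2) ^ 2 = 0 := by
    linear_combination (E * (x₁ * y₁ + x₂ * y₂) + 2 * F * (x₁ ^ 2 + x₂ ^ 2)) * S1 -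
      E * (x₁ ^ 2 + x₂ ^ 2) * S2 + (E ^ 2 * (x₁ * y₂ - x₂ * y₁)) * S3
  have hxq : x₁ ^ 2 + x₂ ^ 2 = 0 := by
    have h4 : (4 : ℝ) * (E * G - F ^ 2) ≠ 0 := by positivity
    have := (mul_eq_zero.mp hq4).resolve_left h4
    exact sq_eq_zero_iff.mp this
  have hx1z : x₁ = 0 := by
    have h : x₁ ^ 2 = 0 := by linarith [sq_nonneg x₁, sq_nonneg x₂]
    exact sq_eq_zero_iff.mp h
  have hx2z : x₂ = 0 := by
    have h : x₂ ^ 2 = 0 := by linarith [sq_nonneg x₁, sq_nonneg x₂]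
    exact sq_eq_zero_iff.mp h
  have hyq : y₁ ^ 2 + y₂ ^ 2 = 0 := by
    have h : E * (y₁ ^ 2 + y₂ ^ 2) = 0 := by
      rw [hx1z, hx2z] at S2; linarith [S2]
    have := (mul_eq_zero.mp h).resolve_left hEne
    exact this
  have hy1z : y₁ = 0 := by
    have h : y₁ ^ 2 = 0 := by linarith [sq_nonneg y₁, sq_nonneg y₂]
    exact sq_eq_zero_iff.mp h
  have hy2z : y₂ = 0 := by
    have h : y₂ ^ 2 = 0 := by linarith [sq_nonneg y₁, sq_nonneg y₂]
    exact sq_eq_zero_iff.mp h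
  have hf1 : E * f₁ = F * e₁ := by rw [hx₁] at hx1z; linarith
  have hf2 : E * f₂ = F * e₂ := by rw [hx₂] at hx2z; linarith
  have hg1 : E * g₁ = G * e₁ := by rw [hy₁] at hy1z; linarith
  have hg2 : E * g₂ = G * e₂ := by rw [hy₂] at hy2z; linarith
  have hH1e : H₁ = e₁ / E := by
    rw [hH₁]
    rw [div_eq_div_iff (by positivity) hEne]
    linear_combination E * hg1 - 2 * F * hf1
  have hH2e : H₂ = e₂ / E := by
    rw [hH₂]
    rw [div_eq_div_iff (by positivity) hEne]
    linear_combination E * hg2 - 2 * F * hf2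
  intro du dv hI
  constructor
  · rw [hH1e, div_eq_div_iff hI hEne]
    linear_combination (2 * du * dv) * hf1 + (dv ^ 2) * hg1
  · rw [hH2e, div_eq_div_iff hI hEne]
    linear_combination (2 * du * dv) * hf2 + (dv ^ 2) * hg2
end

section
/- If (E, F, G), (e₁, f₁, g₁), (e₂, f₂, g₂) ∈ R³ with EG - F² > 0 are linearly dependent, and the point 0 ∈ R² does not lie on the line through the values of the map v ↦ (II_{ν₁}(v)/I(v), II_{ν₂}(v)/I(v)), then there exists an orthonormal change of normal frame (a rotation applied to (ν₁, ν₂), i.e., to the pairs (e₁,e₂), (f₁,f₂), (g₁,g₂) componentwise) after which the new second coefficients satisfy (ẽ₂, f̃₂, g̃₂) = λ(E, F, G) for some scalar λ ≠ 0. -/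
lemma exists_angle {s c : ℝ} (h : s ^ 2 + c ^ 2 = 1) :
    ∃ θ : ℝ, Real.sin θ = s ∧ Real.cos θ = c := by
  have hc1 : -1 ≤ c := by nlinarith [sq_nonneg s, sq_nonneg (c + 1)]
  have hc2 : c ≤ 1 := by nlinarith [sq_nonneg s, sq_nonneg (c - 1)]
  rcases le_or_gt 0 s with hs | hs
  · refine ⟨Real.arccos c, ?_, Real.cos_arccos hc1 hc2⟩
    rw [Real.sin_arccos, show 1 - c ^ 2 = s ^ 2 by linarith]
    exact Real.sqrt_sq hs
  · refine ⟨-Real.arccos c, ?_, by rw [Real.cos_neg]; exact Real.cos_arccos hc1 hc2⟩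
    rw [Real.sin_neg, Real.sin_arccos, show 1 - c ^ 2 = s ^ 2 by linarith,
      Real.sqrt_sq_eq_abs, abs_of_neg hs, neg_neg]

lemma exists_angle' {s t : ℝ} (h : ¬(s = 0 ∧ t = 0)) :
    ∃ θ r : ℝ, 0 < r ∧ Real.sin θ = s / r ∧ Real.cos θ = t / r := by
  have hst : 0 < s ^ 2 + t ^ 2 := by
    rcases not_and_or.mp h with h' | h' <;> positivity
  have hr : 0 < Real.sqrt (s ^ 2 + t ^ 2) := Real.sqrt_pos.mpr hst
  obtain ⟨θ, hθ⟩ := exists_angle (s := s / Real.sqrt (s ^ 2 + t ^ 2))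
    (c := t / Real.sqrt (s ^ 2 + t ^ 2)) (by
      rw [div_pow, div_pow, ← add_div, Real.sq_sqrt hst.le, div_self hst.ne'])
  exact ⟨θ, _, hr, hθ.1, hθ.2⟩

/-- Two distinct points on a line `βx + γy = 0` through the origin:
the origin is an affine combination of them. -/
lemma line_lemma {b c : ℝ} (h : ¬(b = 0 ∧ c = 0)) {P Q : ℝ × ℝ}
    (hP : b * P.1 + c * P.2 = 0) (hQ : b * Q.1 + c * Q.2 = 0) (hne : P ≠ Q) :
    ∃ t : ℝ, t • (Q - P) + P = (0 : ℝ × ℝ) := by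
  rcases not_and_or.mp h with hb | hc
  · -- b ≠ 0 : first coords determined by second
    have h2 : P.2 ≠ Q.2 := by
      intro he
      apply hne
      have : b * P.1 = b * Q.1 := by rw [he] at hP; linarith
      exact Prod.ext (mul_left_cancel₀ hb this) he
    refine ⟨P.2 / (P.2 - Q.2), ?_⟩
    have hd : P.2 - Q.2 ≠ 0 := sub_ne_zero.mpr h2
    have e1 : P.1 = -c * P.2 / b := by field_simp; linarith
    have e2 : Q.1 = -c * Q.2 / b := by field_simp; linarith
    ext
    · show P.2 / (P.2 - Q.2) * (Q.1 - P.1) + P.1 = 0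
      rw [e1, e2]; field_simp; ring
    · show P.2 / (P.2 - Q.2) * (Q.2 - P.2) + P.2 = 0
      field_simp
      ring
  · have h1 : P.1 ≠ Q.1 := by
      intro he
      apply hne
      have : c * P.2 = c * Q.2 := by rw [he] at hP; linarith
      exact Prod.ext he (mul_left_cancel₀ hc this)
    refine ⟨P.1 / (P.1 - Q.1), ?_⟩
    have hd : P.1 - Q.1 ≠ 0 := sub_ne_zero.mpr h1
    have e1 : P.2 = -b * P.1 / c := by field_simp; linarith
    have e2 : Q.2 = -b * Q.1 / c := by field_simp; linarith
    ext
    · show P.1 / (P.1 - Q.1) * (Q.1 - P.1) + P.1 = 0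
      field_simp
      ring
    · show P.1 / (P.1 - Q.1) * (Q.2 - P.2) + P.2 = 0
      rw [e1, e2]; field_simp; ring

/-- if `(E,F,G)`, `(e₁,f₁,g₁)`, `(e₂,f₂,g₂)` are linearly dependent
(`EG - F² > 0`) and the origin of the normal plane does not lie on the affine line
spanned by the values of `v ↦ (II_{ν₁}(v)/I(v), II_{ν₂}(v)/I(v))`, then some rotation of
the normal frame makes the new second coefficients `(ẽ₂, f̃₂, g̃₂) = λ(E, F, G)` with
`λ ≠ 0`. -/
theorem stmt14 (E F G e₁ f₁ g₁ e₂ f₂ g₂ : ℝ) (hpos : 0 < E * G - F ^ 2) (hE : 0 < E)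
    (hdep : Matrix.det !![E, F, G; e₁, f₁, g₁; e₂, f₂, g₂] = 0)
    (h0 : (0 : ℝ × ℝ) ∉ affineSpan ℝ
      {x : ℝ × ℝ | ∃ du dv : ℝ, (du, dv) ≠ (0, 0) ∧
        x = ((e₁ * du ^ 2 + 2 * f₁ * du * dv + g₁ * dv ^ 2) /
              (E * du ^ 2 + 2 * F * du * dv + G * dv ^ 2),
             (e₂ * du ^ 2 + 2 * f₂ * du * dv + g₂ * dv ^ 2) /
              (E * du ^ 2 + 2 * F * du * dv + G * dv ^ 2))}) :
    ∃ θ lam : ℝ, lam ≠ 0 ∧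
      Real.sin θ * e₁ + Real.cos θ * e₂ = lam * E ∧
      Real.sin θ * f₁ + Real.cos θ * f₂ = lam * F ∧
      Real.sin θ * g₁ + Real.cos θ * g₂ = lam * G := by
  set S : Set (ℝ × ℝ) :=
      {x : ℝ × ℝ | ∃ du dv : ℝ, (du, dv) ≠ (0, 0) ∧
        x = ((e₁ * du ^ 2 + 2 * f₁ * du * dv + g₁ * dv ^ 2) /
              (E * du ^ 2 + 2 * F * du * dv + G * dv ^ 2),
             (e₂ * du ^ 2 + 2 * f₂ * du * dv + g₂ * dv ^ 2) /
              (E * du ^ 2 + 2 * F * du * dv + G * dv ^ 2))} with hS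
  have hG : 0 < G := by nlinarith [sq_nonneg F]
  have hH : 0 < E + 2 * F + G := by nlinarith [sq_nonneg (E + F)]
  -- membership of the three sample points
  have hPmem : ((e₁ / E, e₂ / E) : ℝ × ℝ) ∈ S := by
    refine ⟨1, 0, by norm_num, ?_⟩
    norm_num
  have hQmem : ((g₁ / G, g₂ / G) : ℝ × ℝ) ∈ S := by
    refine ⟨0, 1, by norm_num, ?_⟩
    norm_num
  have hRmem : (((e₁ + 2 * f₁ + g₁) / (E + 2 * F + G),
      (e₂ + 2 * f₂ + g₂) / (E + 2 * F + G)) : ℝ × ℝ) ∈ S := by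
    refine ⟨1, 1, by norm_num, ?_⟩
    norm_num
  -- linear dependence
  obtain ⟨v, hv, hmul⟩ := Matrix.exists_vecMul_eq_zero_iff.mpr hdep
  set a := v 0; set b := v 1; set c := v 2
  have habc : ¬(a = 0 ∧ b = 0 ∧ c = 0) := by
    rintro ⟨h0', h1', h2'⟩
    exact hv (funext fun i => by fin_cases i <;> assumption)
  have he : a * E + b * e₁ + c * e₂ = 0 := by
    have := congrFun hmul 0
    simpa [Matrix.vecMul, dotProduct, Fin.sum_univ_three, a, b, c] using this
  have hf : a * F + b * f₁ + c * f₂ = 0 := by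
    have := congrFun hmul 1
    simpa [Matrix.vecMul, dotProduct, Fin.sum_univ_three, a, b, c] using this
  have hg : a * G + b * g₁ + c * g₂ = 0 := by
    have := congrFun hmul 2
    simpa [Matrix.vecMul, dotProduct, Fin.sum_univ_three, a, b, c] using this
  by_cases ha : a = 0
  · -- rows 2,3 linearly dependent: all points on line b x + c y = 0
    rw [ha] at he hf hg
    have hbc : ¬(b = 0 ∧ c = 0) := fun h => habc ⟨ha, h.1, h.2⟩
    simp only [zero_mul, zero_add] at he hf hg
    -- the three sample points must all coincide
    set P : ℝ × ℝ := (e₁ / E, e₂ / E)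
    set Q : ℝ × ℝ := (g₁ / G, g₂ / G)
    set R : ℝ × ℝ := ((e₁ + 2 * f₁ + g₁) / (E + 2 * F + G),
      (e₂ + 2 * f₂ + g₂) / (E + 2 * F + G))
    have hlineP : b * P.1 + c * P.2 = 0 := by
      show b * (e₁ / E) + c * (e₂ / E) = 0
      field_simp; linarith
    have hlineQ : b * Q.1 + c * Q.2 = 0 := by
      show b * (g₁ / G) + c * (g₂ / G) = 0
      field_simp; linarith
    have hlineR : b * R.1 + c * R.2 = 0 := by
      show b * ((e₁ + 2 * f₁ + g₁) / (E + 2 * F + G)) +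
        c * ((e₂ + 2 * f₂ + g₂) / (E + 2 * F + G)) = 0
      field_simp; linarith
    have origin_mem : ∀ X ∈ S, b * X.1 + c * X.2 = 0 → X ≠ P → False := by
      intro X hX hXline hXP
      obtain ⟨t, ht⟩ := line_lemma hbc hlineP hXline (Ne.symm hXP)
      apply h0
      have := AffineSubspace.smul_vsub_vadd_mem (affineSpan ℝ S) t
        (subset_affineSpan ℝ S hX) (subset_affineSpan ℝ S hPmem)
        (subset_affineSpan ℝ S hPmem)
      rwa [vsub_eq_sub, vadd_eq_add, ht] at this
    by_cases hPQ : Q = P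
    · by_cases hPR : R = P
      · -- all coincide: both rows proportional to (E,F,G)
        obtain ⟨c₁, hc₁⟩ : ∃ cc : ℝ, e₁ = cc * E := ⟨e₁ / E, by field_simp⟩
        obtain ⟨c₂, hc₂⟩ : ∃ cc : ℝ, e₂ = cc * E := ⟨e₂ / E, by field_simp⟩
        have hQ1 : g₁ / G = e₁ / E := congrArg Prod.fst hPQ
        have hQ2 : g₂ / G = e₂ / E := congrArg Prod.snd hPQ
        have hR1 : (e₁ + 2 * f₁ + g₁) / (E + 2 * F + G) = e₁ / E := congrArg Prod.fst hPR
        have hR2 : (e₂ + 2 * f₂ + g₂) / (E + 2 * F + G) = e₂ / E := congrArg Prod.snd hPR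
        have hce₁ : e₁ / E = c₁ := by rw [hc₁]; field_simp
        have hce₂ : e₂ / E = c₂ := by rw [hc₂]; field_simp
        have hg₁ : g₁ = c₁ * G := by
          rw [hce₁] at hQ1; exact (div_eq_iff hG.ne').mp hQ1
        have hg₂ : g₂ = c₂ * G := by
          rw [hce₂] at hQ2; exact (div_eq_iff hG.ne').mp hQ2
        have hR1' : e₁ + 2 * f₁ + g₁ = c₁ * (E + 2 * F + G) := by
          rw [hce₁] at hR1; exact (div_eq_iff hH.ne').mp hR1
        have hR2' : e₂ + 2 * f₂ + g₂ = c₂ * (E + 2 * F + G) := by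
          rw [hce₂] at hR2; exact (div_eq_iff hH.ne').mp hR2
        have hf₁ : f₁ = c₁ * F := by linarith [hR1', hc₁, hg₁]
        have hf₂ : f₂ = c₂ * F := by linarith [hR2', hc₂, hg₂]
        have hcc : ¬(c₁ = 0 ∧ c₂ = 0) := by
          rintro ⟨h1, h2⟩
          rw [h1, zero_mul] at hc₁
          rw [h2, zero_mul] at hc₂
          apply h0
          have hP0 : ((e₁ / E, e₂ / E) : ℝ × ℝ) = (0 : ℝ × ℝ) := by
            rw [hc₁, hc₂]; norm_num
          rw [← hP0]
          exact subset_affineSpan ℝ S hPmem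
        obtain ⟨θ, r, hr, hsin, hcos⟩ := exists_angle' hcc
        refine ⟨θ, (c₁ ^ 2 + c₂ ^ 2) / r, ?_, ?_, ?_, ?_⟩
        · have h1 : 0 < c₁ ^ 2 + c₂ ^ 2 := by
            rcases not_and_or.mp hcc with h' | h' <;> positivity
          positivity
        · rw [hsin, hcos, hc₁, hc₂]; ring
        · rw [hsin, hcos, hf₁, hf₂]; ring
        · rw [hsin, hcos, hg₁, hg₂]; ring
      · exact (origin_mem R hRmem hlineR hPR).elim
    · exact (origin_mem Q hQmem hlineQ hPQ).elim
  · -- a ≠ 0 : (E,F,G) in span of the two rows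
    have hbc : ¬(b = 0 ∧ c = 0) := by
      rintro ⟨h1, h2⟩
      rw [h1, h2] at he
      simp at he
      rcases he with h | h
      · exact ha h
      · exact absurd h hE.ne'
    obtain ⟨θ, r, hr, hsin, hcos⟩ := exists_angle' hbc
    refine ⟨θ, -a / r, ?_, ?_, ?_, ?_⟩
    · exact div_ne_zero (neg_ne_zero.mpr ha) hr.ne'
    all_goals
      rw [hsin, hcos]
      field_simp
      linarith
end
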